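/- With the notation above and A = √(I_m − θ̂θ), the function f = det(A)^{-1} = det(I_m − θ̂θ)^{-1/2} satisfies, for all 1 ≤ l ≤ m and 1 ≤ j ≤ 2n, the differential equation Σ_{t=1}^{m} (A²)_{lt} ∂_{θ_{jt}} f = − θ̂_{lj} f. -/

import Mathlib

noncomputable section

open Matrix

/-- The standard symplectic matrix `J = [[0, Iₙ],[-Iₙ, 0]]`, with entries in `Λ`. -/
def sympJ (n : ℕ) (Λ : Type*) [Ring Λ] :
    Matrix (Fin n ⊕ Fin n) (Fin n ⊕ Fin n) Λ :=
  Matrix.fromBlocks 0 1 (-1) 0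

/-- The determinant of a square matrix over a (possibly noncommutative) ring,
via the Leibniz formula with ordered products. -/
def ncDet {m : ℕ} {Λ : Type*} [Ring Λ] (M : Matrix (Fin m) (Fin m) Λ) : Λ :=
  ∑ σ : Equiv.Perm (Fin m),
    (Equiv.Perm.sign σ : ℤ) • ((List.finRange m).map fun i => M (σ i) i).prod

/-- The binomial coefficient `binom(-1/2, k)`, the `k`-th Taylor coefficient of
`(1+x)^{-1/2}`. -/
def invSqrtCoeff (k : ℕ) : ℝ :=
  (∏ i ∈ Finset.range k, (-(1 : ℝ) / 2 - (i : ℝ))) / (Nat.factorial k)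

/-!
The entries of `θ̂θ` are sums of products of two generators, so `A² = 1 - θ̂θ` lives over a
commutative subalgebra of even central elements, on which every `∂_{θ_{jt}}` restricts to a
derivation. Jacobi's formula, the symmetry of `A²` and
`∂_{θ_{jt}} (A²)_{ab} = δ_{at} θ̂_{bj} + δ_{bt} θ̂_{aj}` give
`Σ_t (A²)_{lt} ∂_{θ_{jt}} det A² = 2 det A² θ̂_{lj}`. The truncated series `p` of `(1 + x)^{-1/2}`
satisfies `2 (1 + x) p' + p = c x^N`, and with `x = det A² - 1` and `N = nm` the error term
`x^N θ̂` vanishes: it is a combination of products of `2nm + 1` of the `2nm` anticommuting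
generators.
-/

open Polynomial
open scoped IsMulCommutative

section Anticommuting

variable {R ι : Type*} [Ring R] {g : ι → R}
  (hanti : ∀ a b, g a * g b = -(g b * g a)) (hsq : ∀ a, g a * g a = 0)
include hanti hsq

theorem mul_list_prod_eq_zero_of_mem {a : ι} {L : List ι} (ha : a ∈ L) :
    g a * (L.map g).prod = 0 := by
  induction L with
  | nil => simp at ha
  | cons b L ih =>
    rw [List.map_cons, List.prod_cons, ← mul_assoc]
    rcases List.mem_cons.mp ha with rfl | ha
    · rw [hsq, zero_mul]
    · rw [hanti, neg_mul, mul_assoc, ih ha, mul_zero, neg_zero]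

theorem list_prod_eq_zero_of_not_nodup {L : List ι} (hL : ¬ L.Nodup) :
    (L.map g).prod = 0 := by
  induction L with
  | nil => exact absurd List.nodup_nil hL
  | cons b L ih =>
    rw [List.map_cons, List.prod_cons]
    by_cases hb : b ∈ L
    · exact mul_list_prod_eq_zero_of_mem hanti hsq hb
    · rw [ih fun h => hL (List.nodup_cons.mpr ⟨hb, h⟩), mul_zero]

theorem list_prod_eq_zero_of_card_lt [Fintype ι] {L : List ι} (hL : Fintype.card ι < L.length) :
    (L.map g).prod = 0 :=
  list_prod_eq_zero_of_not_nodup hanti hsq fun h => hL.not_ge h.length_le_card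

end Anticommuting

section EvenSubalgebra

variable (K : Type*) {R ι : Type*} [CommRing K] [Ring R] [Algebra K R] (g : ι → R)

/-- Only the central products are adjoined, so that the subalgebra is commutative
unconditionally. -/
def evenSubalgebra : Subalgebra K R :=
  Algebra.adjoin K (Set.center R ∩ Set.range fun p : ι × ι => g p.1 * g p.2)

theorem evenSubalgebra_le_center : evenSubalgebra K g ≤ Subalgebra.center K R :=
  Algebra.adjoin_le Set.inter_subset_left

instance : IsMulCommutative (evenSubalgebra K g) :=
  Algebra.isMulCommutative_adjoin K fun _ hx y _ => ((Set.mem_center_iff.mp hx.1).comm y).eq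

def evenIdeal : Ideal (evenSubalgebra K g) :=
  Ideal.span {c | ∃ a b, (c : R) = g a * g b}

variable {K g}

theorem coe_mul_list_prod_eq_zero_of_mem_evenIdeal_pow [Fintype ι]
    (hanti : ∀ a b, g a * g b = -(g b * g a)) (hsq : ∀ a, g a * g a = 0)
    {N : ℕ} {y : evenSubalgebra K g} (hy : y ∈ evenIdeal K g ^ N) :
    ∀ L : List ι, Fintype.card ι < 2 * N + L.length → (y : R) * (L.map g).prod = 0 := by
  induction hy using Submodule.pow_induction_on_left' with
  | algebraMap r =>
    intro L hL
    rw [list_prod_eq_zero_of_card_lt hanti hsq (by omega), mul_zero]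
  | add x y i _ _ hx hy =>
    intro L hL
    rw [Subalgebra.coe_add, add_mul, hx L hL, hy L hL, add_zero]
  | mem_mul c hc i x _ hx =>
    intro L hL
    induction hc using Submodule.span_induction with
    | mem c hc =>
      obtain ⟨a, b, hab⟩ := hc
      have hcomm : g a * g b * x = x * (g a * g b) :=
        Subalgebra.mem_center_iff.mp (evenSubalgebra_le_center K g x.2) _
      rw [Subalgebra.coe_mul, hab, hcomm, mul_assoc, mul_assoc]
      simpa using hx (a :: b :: L) (by simp; omega)
    | zero => simp
    | add c d _ _ hc hd => rw [add_mul, Subalgebra.coe_add, add_mul, hc, hd, add_zero]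
    | smul c d _ hd => rw [smul_eq_mul, mul_assoc, Subalgebra.coe_mul, mul_assoc, hd, mul_zero]

end EvenSubalgebra

section Leibniz

variable {K R : Type*} [CommRing K] [Ring R] [Algebra K R] (D : Module.End K R) (hD : D 1 = 0)

def leibnizSubalgebra : Subalgebra K R where
  carrier := {u | ∀ v, D (u * v) = D u * v + u * D v}
  mul_mem' {a b} ha hb v := by
    rw [mul_assoc, ha, hb, ha b, add_mul, mul_add, mul_assoc, mul_assoc, mul_assoc, add_assoc]
  add_mem' ha hb v := by
    rw [add_mul, map_add, ha, hb, map_add, add_mul, add_mul]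
    abel
  algebraMap_mem' r v := by
    rw [Algebra.algebraMap_eq_smul_one, map_smul, hD, smul_zero, zero_mul, zero_add,
      smul_mul_assoc, one_mul, smul_mul_assoc, one_mul, map_smul]

def leibnizDerivation (S : Subalgebra K R) [IsMulCommutative S]
    (hcenter : S ≤ Subalgebra.center K R) (hleibniz : S ≤ leibnizSubalgebra D hD) :
    Derivation K S R :=
  Derivation.mk' (D ∘ₗ S.val.toLinearMap) fun a b => by
    rw [LinearMap.comp_apply, AlgHom.toLinearMap_apply, Subalgebra.coe_val, Subalgebra.coe_mul,
      hleibniz a.2, Subalgebra.mem_center_iff.mp (hcenter b.2), add_comm]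
    rfl

theorem leibnizDerivation_apply (S : Subalgebra K R) [IsMulCommutative S]
    (hcenter : S ≤ Subalgebra.center K R) (hleibniz : S ≤ leibnizSubalgebra D hD) (x : S) :
    leibnizDerivation D hD S hcenter hleibniz x = D x :=
  rfl

end Leibniz

section Jacobi

variable {R A M : Type*} [CommRing R] [CommRing A] [Algebra R A] [AddCommGroup M] [Module A M]
  [Module R M]

theorem Derivation.map_finsetProd (δ : Derivation R A M) {ι : Type*} [DecidableEq ι]
    (s : Finset ι) (f : ι → A) :
    δ (∏ i ∈ s, f i) = ∑ i ∈ s, (∏ k ∈ s.erase i, f k) • δ (f i) := by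
  induction s using Finset.induction_on with
  | empty => simp
  | insert a s ha ih =>
    rw [Finset.prod_insert ha, Derivation.leibniz, ih, Finset.sum_insert ha,
      Finset.erase_insert ha, Finset.smul_sum, add_comm]
    congr 1
    refine Finset.sum_congr rfl fun i hi => ?_
    rw [smul_smul, Finset.erase_insert_of_ne (ne_of_mem_of_not_mem hi ha).symm,
      Finset.prod_insert fun h => ha (Finset.mem_of_mem_erase h)]

variable {n : Type*} [Fintype n] [DecidableEq n]

theorem Matrix.prod_updateRow_single (B : Matrix n n A) (σ : Equiv.Perm n) (i a : n) :
    ∏ k, B.updateRow a (Pi.single i 1) (σ k) k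
      = if σ i = a then ∏ k ∈ Finset.univ.erase i, B (σ k) k else 0 := by
  split_ifs with h
  · rw [← Finset.mul_prod_erase _ _ (Finset.mem_univ i), h, updateRow_self, Pi.single_eq_same,
      one_mul]
    refine Finset.prod_congr rfl fun k hk => ?_
    rw [updateRow_ne fun hk' => Finset.ne_of_mem_erase hk (σ.injective (hk'.trans h.symm))]
  · refine Finset.prod_eq_zero (Finset.mem_univ (σ.symm a)) ?_
    rw [Equiv.apply_symm_apply, updateRow_self, Pi.single_eq_of_ne]
    rintro rfl
    exact h (σ.apply_symm_apply a)

theorem Derivation.map_det (δ : Derivation R A M) (B : Matrix n n A) :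
    δ B.det = ∑ i, ∑ a, B.adjugate i a • δ (B a i) := by
  simp only [det_apply, adjugate_apply, map_sum, Units.smul_def, map_zsmul, δ.map_finsetProd,
    Finset.smul_sum, Finset.sum_smul, Matrix.prod_updateRow_single]
  rw [Finset.sum_comm]
  refine Finset.sum_congr rfl fun i _ => ?_
  rw [Finset.sum_comm]
  refine Finset.sum_congr rfl fun σ _ => ?_
  simp only [smul_ite, smul_zero, ite_smul, zero_smul, smul_assoc, Finset.sum_ite_eq,
    Finset.mem_univ, if_true]

theorem Matrix.IsSymm.sum_smul_derivation_det {B : Matrix n n A} (hB : B.IsSymm)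
    (δ : n → Derivation R A M) (v : n → M)
    (hδ : ∀ t a i, δ t (B a i) = (if a = t then v i else 0) + (if i = t then v a else 0))
    (l : n) :
    ∑ t, B l t • δ t B.det = (2 * B.det) • v l := by
  have hadj := hB.adjugate.apply
  have hmul (a : n) : ∑ i, B l i * B.adjugate i a = if l = a then B.det else 0 := by
    rw [← mul_apply, mul_adjugate, smul_apply, one_apply, smul_eq_mul, mul_ite, mul_one, mul_zero]
  calc ∑ t, B l t • δ t B.det
      = ∑ i, ∑ a, ∑ t, B l t • B.adjugate i a • δ t (B a i) := by
        simp only [Derivation.map_det, Finset.smul_sum]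
        rw [Finset.sum_comm]
        exact Finset.sum_congr rfl fun i _ => Finset.sum_comm
    _ = ∑ i, ∑ a, ((B l a * B.adjugate a i) • v i + (B l i * B.adjugate i a) • v a) := by
        refine Finset.sum_congr rfl fun i _ => Finset.sum_congr rfl fun a _ => ?_
        simp only [hδ, smul_add, smul_ite, smul_zero, Finset.sum_add_distrib, Finset.sum_ite_eq,
          Finset.mem_univ, if_true, smul_smul, hadj i a]
    _ = ∑ i, (∑ a, B l a * B.adjugate a i) • v i
          + ∑ a, (∑ i, B l i * B.adjugate i a) • v a := by
        simp only [Finset.sum_add_distrib, Finset.sum_smul]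
        rw [Finset.sum_comm (f := fun i a => (B l i * B.adjugate i a) • v a)]
    _ = (2 * B.det) • v l := by
        simp only [hmul, ite_smul, zero_smul, Finset.sum_ite_eq, Finset.mem_univ, if_true]
        rw [two_mul, add_smul]

end Jacobi

section InvSqrtSeries

theorem invSqrtCoeff_succ (k : ℕ) :
    2 * (k + 1) * invSqrtCoeff (k + 1) = -(2 * k + 1) * invSqrtCoeff k := by
  rw [invSqrtCoeff, invSqrtCoeff, Finset.prod_range_succ, Nat.factorial_succ]
  push_cast
  field_simp
  ring

def invSqrtPoly (N : ℕ) : ℝ[X] :=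
  ∑ k ∈ Finset.range (N + 1), C (invSqrtCoeff k) * X ^ k

theorem aeval_invSqrtPoly {R : Type*} [Ring R] [Algebra ℝ R] (x : R) (N : ℕ) :
    aeval x (invSqrtPoly N) = ∑ k ∈ Finset.range (N + 1), invSqrtCoeff k • x ^ k := by
  simp [invSqrtPoly, Algebra.smul_def]

/-- `(1 + x)^{-1/2}` solves `2 (1 + x) y' = -y`; truncation leaves only the top-degree term. -/
theorem invSqrtPoly_ode (N : ℕ) :
    2 * (1 + X) * derivative (invSqrtPoly N)
      = C ((2 * N + 1) * invSqrtCoeff N) * X ^ N - invSqrtPoly N := by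
  induction N with
  | zero => simp [invSqrtPoly]
  | succ N ih =>
    have hrec := congrArg C (invSqrtCoeff_succ N)
    simp only [map_mul, map_add, map_neg, map_ofNat, map_one, map_natCast] at hrec
    rw [invSqrtPoly, Finset.sum_range_succ, ← invSqrtPoly, derivative_add, mul_add, ih,
      derivative_C_mul_X_pow]
    push_cast
    simp only [map_mul, map_add, map_ofNat, map_one, map_natCast]
    linear_combination X ^ N * hrec

theorem Matrix.IsSymm.sum_smul_derivation_aeval_invSqrtPoly {A M n : Type*} [CommRing A]
    [Algebra ℝ A] [AddCommGroup M] [Module A M] [Module ℝ M] [IsScalarTower ℝ A M] [Fintype n]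
    [DecidableEq n] {B : Matrix n n A} (hB : B.IsSymm) (δ : n → Derivation ℝ A M) (v : n → M)
    (hδ : ∀ t a i, δ t (B a i) = (if a = t then v i else 0) + (if i = t then v a else 0))
    (N : ℕ) (l : n) :
    ∑ t, B l t • δ t (aeval (B.det - 1) (invSqrtPoly N))
      = ((2 * N + 1) * invSqrtCoeff N) • (B.det - 1) ^ N • v l
        - aeval (B.det - 1) (invSqrtPoly N) • v l := by
  have hode := congrArg (aeval (B.det - 1)) (invSqrtPoly_ode N)
  simp only [map_mul, map_sub, map_add, map_one, map_ofNat, map_pow, aeval_X, aeval_C,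
    add_sub_cancel] at hode
  calc ∑ t, B l t • δ t (aeval (B.det - 1) (invSqrtPoly N))
      = aeval (B.det - 1) (derivative (invSqrtPoly N)) • ∑ t, B l t • δ t B.det := by
        simp only [Derivation.map_aeval, map_sub, Derivation.map_one_eq_zero, sub_zero,
          Finset.smul_sum]
        exact Finset.sum_congr rfl fun t _ => smul_comm _ _ _
    _ = _ := by
        rw [hB.sum_smul_derivation_det δ v hδ, smul_smul, mul_comm, hode, sub_smul,
          ← algebraMap_smul A ((2 * N + 1) * invSqrtCoeff N), smul_smul]
        simp only [map_mul, map_add, map_ofNat, map_one, map_natCast]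

end InvSqrtSeries

theorem ncDet_map {m : ℕ} {A R F : Type*} [CommRing A] [Ring R] [FunLike F A R]
    [RingHomClass F A R] (f : F) (M : Matrix (Fin m) (Fin m) A) : ncDet (M.map f) = f M.det := by
  rw [ncDet, det_apply', map_sum]
  refine Finset.sum_congr rfl fun σ _ => ?_
  rw [map_mul, map_intCast, ← zsmul_eq_mul, Fin.prod_univ_def, map_list_prod, List.map_map]
  rfl

theorem Matrix.det_sub_one_mem {n A : Type*} [Fintype n] [DecidableEq n] [CommRing A]
    {I : Ideal A} {B : Matrix n n A} (hB : ∀ i j, (B - 1) i j ∈ I) : B.det - 1 ∈ I := by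
  have hmap : (Ideal.Quotient.mk I).mapMatrix B = 1 := by
    ext i j
    rw [RingHom.mapMatrix_apply, map_apply, ← map_one (Ideal.Quotient.mk I).mapMatrix,
      RingHom.mapMatrix_apply, map_apply, Ideal.Quotient.eq]
    exact hB i j
  rw [← Ideal.Quotient.eq, map_one, RingHom.map_det, hmap, det_one]

section Grassmann

variable {m n : ℕ} {Λ : Type*} [Ring Λ] (θ : Matrix (Fin n ⊕ Fin n) (Fin m) Λ)

theorem transpose_mul_sympJ_apply_inl (a : Fin m) (q : Fin n) :
    (θᵀ * sympJ n Λ) a (Sum.inl q) = -θ (Sum.inr q) a := by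
  simp [sympJ, mul_apply, Fintype.sum_sum_type, one_apply]

theorem transpose_mul_sympJ_apply_inr (a : Fin m) (q : Fin n) :
    (θᵀ * sympJ n Λ) a (Sum.inr q) = θ (Sum.inl q) a := by
  simp [sympJ, mul_apply, Fintype.sum_sum_type, one_apply]

theorem transpose_mul_sympJ_mul_apply (a b : Fin m) :
    (θᵀ * sympJ n Λ * θ) a b
      = ∑ q, (θ (Sum.inl q) a * θ (Sum.inr q) b - θ (Sum.inr q) a * θ (Sum.inl q) b) := by
  simp only [mul_apply (M := θᵀ * sympJ n Λ), Fintype.sum_sum_type, transpose_mul_sympJ_apply_inl,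
    transpose_mul_sympJ_apply_inr, neg_mul, ← Finset.sum_add_distrib]
  exact Finset.sum_congr rfl fun q _ => by abel

variable [Algebra ℝ Λ]

section Derivative

variable {θ} {D : Module.End ℝ Λ} {j : Fin n ⊕ Fin n} {t : Fin m} (hD1 : D 1 = 0)
  (hDθ : ∀ k l u, D (θ k l * u) = (if k = j ∧ l = t then u else 0) - θ k l * D u)
include hD1 hDθ

theorem map_theta_mul_theta (p : Fin n ⊕ Fin n) (q : Fin m) (r : Fin n ⊕ Fin n) (s : Fin m) :
    D (θ p q * θ r s)
      = (if p = j ∧ q = t then θ r s else 0) - (if r = j ∧ s = t then θ p q else 0) := by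
  have hθ := hDθ r s 1
  rw [mul_one, hD1, mul_zero, sub_zero] at hθ
  rw [hDθ, hθ, mul_ite, mul_one, mul_zero]

theorem map_theta_mul_theta_mul (p : Fin n ⊕ Fin n) (q : Fin m) (r : Fin n ⊕ Fin n) (s : Fin m)
    (v : Λ) : D (θ p q * θ r s * v) = D (θ p q * θ r s) * v + θ p q * θ r s * D v := by
  rw [map_theta_mul_theta hD1 hDθ, mul_assoc, hDθ, hDθ]
  simp only [sub_mul, ite_mul, zero_mul, mul_sub, mul_ite, mul_zero, mul_assoc]
  abel

theorem map_transpose_mul_sympJ_mul_apply (a b : Fin m) :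
    D ((θᵀ * sympJ n Λ * θ) a b)
      = -((if a = t then (θᵀ * sympJ n Λ) b j else 0)
          + (if b = t then (θᵀ * sympJ n Λ) a j else 0)) := by
  rw [transpose_mul_sympJ_mul_apply, map_sum]
  simp only [map_sub, map_theta_mul_theta hD1 hDθ]
  cases j <;>
  · simp [ite_and, Finset.sum_add_distrib, transpose_mul_sympJ_apply_inl,
      transpose_mul_sympJ_apply_inr]
    split_ifs <;> abel

theorem evenSubalgebra_le_leibnizSubalgebra :
    evenSubalgebra ℝ (Function.uncurry θ) ≤ leibnizSubalgebra D hD1 :=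
  Algebra.adjoin_le fun _ ⟨_, ((p, q), (r, s)), hpr⟩ v =>
    hpr ▸ map_theta_mul_theta_mul hD1 hDθ p q r s v

def evenDerivation : Derivation ℝ (evenSubalgebra ℝ (Function.uncurry θ)) Λ :=
  leibnizDerivation D hD1 _ (evenSubalgebra_le_center ℝ _)
    (evenSubalgebra_le_leibnizSubalgebra hD1 hDθ)

end Derivative

variable {θ} in
theorem coe_mul_transpose_mul_sympJ_eq_zero
    (hodd : ∀ i j k l, θ i j * θ k l = -(θ k l * θ i j))
    {x : evenSubalgebra ℝ (Function.uncurry θ)}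
    (hx : x ∈ evenIdeal ℝ (Function.uncurry θ) ^ (n * m)) (l : Fin m) (j : Fin n ⊕ Fin n) :
    (x : Λ) * (θᵀ * sympJ n Λ) l j = 0 := by
  have hsq (p : (Fin n ⊕ Fin n) × Fin m) : θ p.1 p.2 * θ p.1 p.2 = 0 := by
    have h2 : (2 : ℝ) • (θ p.1 p.2 * θ p.1 p.2) = 0 := by
      rw [two_smul]
      nth_rewrite 1 [hodd]
      exact neg_add_cancel _
    exact (smul_eq_zero.mp h2).resolve_left two_ne_zero
  have hθ (p : (Fin n ⊕ Fin n) × Fin m) : (x : Λ) * θ p.1 p.2 = 0 := by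
    simpa using coe_mul_list_prod_eq_zero_of_mem_evenIdeal_pow (fun a b => hodd _ _ _ _) hsq hx
      [p] (by simp [Fintype.card_sum, Fintype.card_prod]; ring_nf; omega)
  cases j with
  | inl q => rw [transpose_mul_sympJ_apply_inl, mul_neg, hθ (Sum.inr q, l), neg_zero]
  | inr q => rw [transpose_mul_sympJ_apply_inr, hθ (Sum.inl q, l)]

section EvenGram

variable (hcent : ∀ i j k l (c : Λ), Commute (θ i j * θ k l) c)
include hcent

theorem theta_mul_theta_mem_evenSubalgebra (p : Fin n ⊕ Fin n) (q : Fin m) (r : Fin n ⊕ Fin n)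
    (s : Fin m) : θ p q * θ r s ∈ evenSubalgebra ℝ (Function.uncurry θ) :=
  Algebra.subset_adjoin ⟨Semigroup.mem_center_iff.mpr fun c => (hcent p q r s c).eq.symm,
    ((p, q), (r, s)), rfl⟩

def evenGram : Matrix (Fin m) (Fin m) (evenSubalgebra ℝ (Function.uncurry θ)) :=
  of fun a b => ∑ q,
    (⟨_, theta_mul_theta_mem_evenSubalgebra θ hcent (Sum.inl q) a (Sum.inr q) b⟩
      - ⟨_, theta_mul_theta_mem_evenSubalgebra θ hcent (Sum.inr q) a (Sum.inl q) b⟩)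

theorem map_one_sub_evenGram :
    (1 - evenGram θ hcent).map (evenSubalgebra ℝ (Function.uncurry θ)).val
      = 1 - θᵀ * sympJ n Λ * θ := by
  rw [← AlgHom.mapMatrix_apply, map_sub, map_one, AlgHom.mapMatrix_apply]
  congr 1
  ext a b
  simp [evenGram, transpose_mul_sympJ_mul_apply]

theorem isSymm_one_sub_evenGram (hodd : ∀ i j k l, θ i j * θ k l = -(θ k l * θ i j)) :
    (1 - evenGram θ hcent).IsSymm := by
  refine isSymm_one.sub ?_
  ext a b
  simp only [transpose_apply, evenGram, of_apply, AddSubmonoidClass.coe_finsetSum,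
    AddSubgroupClass.coe_sub]
  refine Finset.sum_congr rfl fun q _ => ?_
  rw [hodd _ b, hodd _ b]
  abel

theorem det_one_sub_evenGram_sub_one_mem :
    (1 - evenGram θ hcent).det - 1 ∈ evenIdeal ℝ (Function.uncurry θ) := by
  refine det_sub_one_mem fun a b => ?_
  rw [sub_sub_cancel_left, neg_apply, neg_mem_iff, evenGram, of_apply]
  refine Ideal.sum_mem _ fun q _ => Ideal.sub_mem _ ?_ ?_ <;>
    exact Ideal.subset_span ⟨(_, _), (_, _), rfl⟩

theorem evenDerivation_one_sub_evenGram {D : Module.End ℝ Λ} {j : Fin n ⊕ Fin n} {t : Fin m}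
    (hD1 : D 1 = 0)
    (hDθ : ∀ k l u, D (θ k l * u) = (if k = j ∧ l = t then u else 0) - θ k l * D u) (a b : Fin m) :
    evenDerivation hD1 hDθ ((1 - evenGram θ hcent) a b)
      = (if a = t then (θᵀ * sympJ n Λ) b j else 0)
        + (if b = t then (θᵀ * sympJ n Λ) a j else 0) := by
  have hentry := congrFun₂ (map_one_sub_evenGram θ hcent) a b
  rw [map_apply, Subalgebra.coe_val] at hentry
  rw [evenDerivation, leibnizDerivation_apply, hentry, Matrix.sub_apply, map_sub,
    map_transpose_mul_sympJ_mul_apply hD1 hDθ, one_apply]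
  split_ifs <;> simp [hD1]

end EvenGram

end Grassmann

/-- with `A² = I_m − θ̂θ`, the function
`f = det(A)⁻¹ = det(I_m − θ̂θ)^{-1/2}` (defined by the terminating binomial
series applied to the nilpotent part of the determinant) satisfies, for all
`l, j`, the differential equation `Σ_t (A²)_{lt} ∂_{θ_{jt}} f = −θ̂_{lj} f`. -/
theorem det_inv_sqrt_diff_eq (m n : ℕ) (Λ : Type*) [Ring Λ] [Algebra ℝ Λ]
    (θ : Matrix (Fin n ⊕ Fin n) (Fin m) Λ)
    (hodd : ∀ i j k l, θ i j * θ k l = -(θ k l * θ i j))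
    (hcent : ∀ i j k l (c : Λ), Commute (θ i j * θ k l) c)
    (D : (Fin n ⊕ Fin n) → Fin m → Module.End ℝ Λ)
    (hD1 : ∀ i j, D i j 1 = 0)
    (hDθ : ∀ i j k l (u : Λ),
      D i j (θ k l * u) = (if k = i ∧ l = j then u else 0) - θ k l * D i j u) :
    ∀ f : Λ,
      f = ∑ k ∈ Finset.range (n * m + 1),
            invSqrtCoeff k • (ncDet (1 - θᵀ * sympJ n Λ * θ) - 1) ^ k →
      ∀ (l : Fin m) (j : Fin n ⊕ Fin n),
        ∑ t : Fin m, ((1 - θᵀ * sympJ n Λ * θ : Matrix (Fin m) (Fin m) Λ)) l t * D j t f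
          = -((θᵀ * sympJ n Λ) l j * f) := by
  intro f hf l j
  set B := 1 - evenGram θ hcent
  set F := aeval (B.det - 1) (invSqrtPoly (n * m)) with hF
  have hf' : f = F := by
    rw [hf, ← map_one_sub_evenGram θ hcent, ncDet_map, ← aeval_invSqrtPoly, hF,
      aeval_subalgebra_coe]
    rfl
  have hnil : (B.det - 1) ^ (n * m) • (θᵀ * sympJ n Λ) l j = 0 :=
    coe_mul_transpose_mul_sympJ_eq_zero hodd
      (Ideal.pow_mem_pow (det_one_sub_evenGram_sub_one_mem θ hcent) _) l j
  have key := (isSymm_one_sub_evenGram θ hcent hodd).sum_smul_derivation_aeval_invSqrtPoly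
    (fun t => evenDerivation (hD1 j t) (hDθ j t)) (fun i => (θᵀ * sympJ n Λ) i j)
    (fun t => evenDerivation_one_sub_evenGram θ hcent (hD1 j t) (hDθ j t)) (n * m) l
  rw [hnil, smul_zero, zero_sub] at key
  calc ∑ t, (1 - θᵀ * sympJ n Λ * θ : Matrix (Fin m) (Fin m) Λ) l t * D j t f
      = ∑ t, B l t • evenDerivation (hD1 j t) (hDθ j t) F := by
        rw [← map_one_sub_evenGram θ hcent, hf']
        rfl
    _ = -(F * (θᵀ * sympJ n Λ) l j) := key
    _ = -((θᵀ * sympJ n Λ) l j * f) := by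
        rw [hf', Subalgebra.mem_center_iff.mp (evenSubalgebra_le_center ℝ _ F.2)]
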